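/- Let ω = e^{2πi/3}. For all complex numbers a and b, the matrix-valued function k ↦ P(k)⁻¹ · A · P(k), where A is the 3×3 matrix with rows (a, 0, 0), (0, 0, 0), (0, b, -a), converges as |k| → ∞ to the off-diagonal matrix 𝒱̃ = (a/(ω(1-ω))) · N, where N is the 3×3 matrix with rows (0, ω, 1+ω), (1+ω, 0, ω), (ω, 1+ω, 0). (With a = q_x/q and b = 1/q - q, this says that the leading term of Ṽ₁ as k → ∞ is off-diagonal and equals 𝒱̃.) -/

import Mathlib

open Complex

/-- The primitive cube root of unity `ω = e^{2πi/3}`. -/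
noncomputable def ω : ℂ := Complex.exp (2 * Real.pi * Complex.I / 3)

/-- `l_j(k) = (1/√3)(ω^j k + 1/(ω^j k))`. -/
noncomputable def lfun (j : ℕ) (k : ℂ) : ℂ :=
  (1 / (Real.sqrt 3 : ℂ)) * (ω ^ j * k + 1 / (ω ^ j * k))

/-- `λ(k) = (1/(3√3))(k³ + 1/k³)`. -/
noncomputable def lamfun (k : ℂ) : ℂ :=
  (1 / (3 * (Real.sqrt 3 : ℂ))) * (k ^ 3 + 1 / k ^ 3)

/-- `z_j(k) = √3 ((ω^j k)² + (ω^j k)⁻²)/(k³ + k⁻³)`. -/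
noncomputable def zfun (j : ℕ) (k : ℂ) : ℂ :=
  (Real.sqrt 3 : ℂ) * ((ω ^ j * k) ^ 2 + ((ω ^ j * k) ^ 2)⁻¹) / (k ^ 3 + (k ^ 3)⁻¹)

/-- The matrix `P(k)` with rows `(1,1,1)`, `(l₁,l₂,l₃)`, `(l₁²,l₂²,l₃²)`. -/
noncomputable def Pmat (k : ℂ) : Matrix (Fin 3) (Fin 3) ℂ :=
  !![1, 1, 1;
     lfun 1 k, lfun 2 k, lfun 3 k;
     (lfun 1 k) ^ 2, (lfun 2 k) ^ 2, (lfun 3 k) ^ 2]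

/-! ### Auxiliary facts about `ω` -/

lemma hωprim : IsPrimitiveRoot ω 3 := by
  have := Complex.isPrimitiveRoot_exp 3 (by norm_num)
  simpa [ω] using this

lemma hω3 : ω ^ 3 = 1 := hωprim.pow_eq_one
lemma hωne1 : ω ≠ 1 := hωprim.ne_one (by norm_num)
lemma hω0 : ω ≠ 0 := by
  intro h; have := hω3; rw [h] at this; norm_num at this
lemma hωsum : ω ^ 2 + ω + 1 = 0 := by
  have h := hω3
  have : (ω - 1) * (ω ^ 2 + ω + 1) = 0 := by ring_nf; linear_combination h
  rcases mul_eq_zero.1 this with h1 | h2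
  · exact absurd (sub_eq_zero.1 h1) hωne1
  · exact h2

lemma d12 : ω ^ 1 - ω ^ 2 ≠ 0 := by
  intro h
  have h1 : ω * (1 - ω) = 0 := by linear_combination h
  rcases mul_eq_zero.1 h1 with h2 | h2
  · exact hω0 h2
  · exact hωne1 (by linear_combination -h2)
lemma d13 : ω ^ 1 - ω ^ 3 ≠ 0 := by
  rw [hω3]; intro h; exact hωne1 (by linear_combination h)
lemma d23 : ω ^ 2 - ω ^ 3 ≠ 0 := by
  intro h
  have h5 : ω ^ 2 = 1 := by linear_combination h + hω3
  exact hωne1 (by linear_combination -ω * h5 + hω3)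
lemma dω : ω * (1 - ω) ≠ 0 :=
  mul_ne_zero hω0 (fun h => hωne1 (by linear_combination -h))

/-! ### Generic matrices -/

/-- Vandermonde-type matrix. -/
noncomputable def Pg (x1 x2 x3 : ℂ) : Matrix (Fin 3) (Fin 3) ℂ :=
  !![1, 1, 1; x1, x2, x3; x1 ^ 2, x2 ^ 2, x3 ^ 2]

/-- Explicit (Lagrange) inverse of `Pg`. -/
noncomputable def Qg (x1 x2 x3 : ℂ) : Matrix (Fin 3) (Fin 3) ℂ :=
  !![x2 * x3 / ((x1 - x2) * (x1 - x3)), -(x2 + x3) / ((x1 - x2) * (x1 - x3)), 1 / ((x1 - x2) * (x1 - x3));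
     x1 * x3 / ((x2 - x1) * (x2 - x3)), -(x1 + x3) / ((x2 - x1) * (x2 - x3)), 1 / ((x2 - x1) * (x2 - x3));
     x1 * x2 / ((x3 - x1) * (x3 - x2)), -(x1 + x2) / ((x3 - x1) * (x3 - x2)), 1 / ((x3 - x1) * (x3 - x2))]

/-- Conjugated matrix `Qg * A * Pg` in terms of the nodes. -/
noncomputable def Mg (a b x1 x2 x3 : ℂ) : Matrix (Fin 3) (Fin 3) ℂ :=
  !![(a * (x2 * x3 - x1 ^ 2) + b * x1) / ((x1 - x2) * (x1 - x3)),
     (a * (x2 * x3 - x2 ^ 2) + b * x2) / ((x1 - x2) * (x1 - x3)),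
     (a * (x2 * x3 - x3 ^ 2) + b * x3) / ((x1 - x2) * (x1 - x3));
     (a * (x1 * x3 - x1 ^ 2) + b * x1) / ((x2 - x1) * (x2 - x3)),
     (a * (x1 * x3 - x2 ^ 2) + b * x2) / ((x2 - x1) * (x2 - x3)),
     (a * (x1 * x3 - x3 ^ 2) + b * x3) / ((x2 - x1) * (x2 - x3));
     (a * (x1 * x2 - x1 ^ 2) + b * x1) / ((x3 - x1) * (x3 - x2)),
     (a * (x1 * x2 - x2 ^ 2) + b * x2) / ((x3 - x1) * (x3 - x2)),
     (a * (x1 * x2 - x3 ^ 2) + b * x3) / ((x3 - x1) * (x3 - x2))]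

/-- Rescaled version of `Mg` in terms of `y_j = u x_j`. -/
noncomputable def Gg (a b u y1 y2 y3 : ℂ) : Matrix (Fin 3) (Fin 3) ℂ :=
  !![(a * (y2 * y3 - y1 ^ 2) + b * u * y1) / ((y1 - y2) * (y1 - y3)),
     (a * (y2 * y3 - y2 ^ 2) + b * u * y2) / ((y1 - y2) * (y1 - y3)),
     (a * (y2 * y3 - y3 ^ 2) + b * u * y3) / ((y1 - y2) * (y1 - y3));
     (a * (y1 * y3 - y1 ^ 2) + b * u * y1) / ((y2 - y1) * (y2 - y3)),
     (a * (y1 * y3 - y2 ^ 2) + b * u * y2) / ((y2 - y1) * (y2 - y3)),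
     (a * (y1 * y3 - y3 ^ 2) + b * u * y3) / ((y2 - y1) * (y2 - y3));
     (a * (y1 * y2 - y1 ^ 2) + b * u * y1) / ((y3 - y1) * (y3 - y2)),
     (a * (y1 * y2 - y2 ^ 2) + b * u * y2) / ((y3 - y1) * (y3 - y2)),
     (a * (y1 * y2 - y3 ^ 2) + b * u * y3) / ((y3 - y1) * (y3 - y2))]

set_option maxHeartbeats 800000 in
lemma QP (x1 x2 x3 : ℂ) (h12 : x1 - x2 ≠ 0) (h13 : x1 - x3 ≠ 0) (h23 : x2 - x3 ≠ 0) :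
    Qg x1 x2 x3 * Pg x1 x2 x3 = 1 := by
  have h21 : x2 - x1 ≠ 0 := fun h => h12 (by linear_combination -h)
  have h31 : x3 - x1 ≠ 0 := fun h => h13 (by linear_combination -h)
  have h32 : x3 - x2 ≠ 0 := fun h => h23 (by linear_combination -h)
  ext i j
  fin_cases i <;> fin_cases j <;>
    · simp [Qg, Pg, Matrix.mul_apply, Fin.sum_univ_three]
      field_simp
      ring

set_option maxHeartbeats 1600000 in
lemma QAP (a b x1 x2 x3 : ℂ)
    (h12 : x1 - x2 ≠ 0) (h13 : x1 - x3 ≠ 0) (h23 : x2 - x3 ≠ 0) :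
    Qg x1 x2 x3 * !![a, 0, 0; 0, 0, 0; 0, b, -a] * Pg x1 x2 x3 = Mg a b x1 x2 x3 := by
  have h21 : x2 - x1 ≠ 0 := fun h => h12 (by linear_combination -h)
  have h31 : x3 - x1 ≠ 0 := fun h => h13 (by linear_combination -h)
  have h32 : x3 - x2 ≠ 0 := fun h => h23 (by linear_combination -h)
  ext i j
  fin_cases i <;> fin_cases j <;>
    · simp [Qg, Pg, Mg, Matrix.mul_apply, Fin.sum_univ_three]
      field_simp
      ring

set_option maxHeartbeats 1600000 in
lemma Mg_eq_Gg (a b u y1 y2 y3 : ℂ) (hu : u ≠ 0)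
    (h12 : y1 - y2 ≠ 0) (h13 : y1 - y3 ≠ 0) (h23 : y2 - y3 ≠ 0) :
    Mg a b (y1 / u) (y2 / u) (y3 / u) = Gg a b u y1 y2 y3 := by
  have h21 : y2 - y1 ≠ 0 := fun h => h12 (by linear_combination -h)
  have h31 : y3 - y1 ≠ 0 := fun h => h13 (by linear_combination -h)
  have h32 : y3 - y2 ≠ 0 := fun h => h23 (by linear_combination -h)
  have e12 : y1 / u - y2 / u ≠ 0 := by rw [div_sub_div_same]; exact div_ne_zero h12 hu
  have e13 : y1 / u - y3 / u ≠ 0 := by rw [div_sub_div_same]; exact div_ne_zero h13 hu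
  have e23 : y2 / u - y3 / u ≠ 0 := by rw [div_sub_div_same]; exact div_ne_zero h23 hu
  have e21 : y2 / u - y1 / u ≠ 0 := by rw [div_sub_div_same]; exact div_ne_zero h21 hu
  have e31 : y3 / u - y1 / u ≠ 0 := by rw [div_sub_div_same]; exact div_ne_zero h31 hu
  have e32 : y3 / u - y2 / u ≠ 0 := by rw [div_sub_div_same]; exact div_ne_zero h32 hu
  ext i j
  fin_cases i <;> fin_cases j <;>
    · simp [Mg, Gg, -div_sub_div_same, -one_div]
      first
      | rw [div_eq_div_iff (mul_ne_zero e12 e13) (mul_ne_zero h12 h13)]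
      | rw [div_eq_div_iff (mul_ne_zero e21 e23) (mul_ne_zero h21 h23)]
      | rw [div_eq_div_iff (mul_ne_zero e31 e32) (mul_ne_zero h31 h32)]
      field_simp

/-- The value of `Gg` at `u = 0`, `y_j = ω^j`. -/
lemma Gg_zero (a b : ℂ) :
    Gg a b 0 (ω ^ 1) (ω ^ 2) (ω ^ 3) =
      (a / (ω * (1 - ω))) • !![0, ω, 1 + ω; 1 + ω, 0, ω; ω, 1 + ω, 0] := by
  have h21 : ω ^ 2 - ω ^ 1 ≠ 0 := fun h => d12 (by linear_combination -h)
  have h31 : ω ^ 3 - ω ^ 1 ≠ 0 := fun h => d13 (by linear_combination -h)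
  have h32 : ω ^ 3 - ω ^ 2 ≠ 0 := fun h => d23 (by linear_combination -h)
  have e1 : (ω - ω ^ 2) * (ω - ω ^ 3) ≠ 0 := mul_ne_zero (by simpa using d12) (by simpa using d13)
  have e2 : (ω ^ 2 - ω) * (ω ^ 2 - ω ^ 3) ≠ 0 := mul_ne_zero (by simpa using h21) d23
  have e3 : (ω ^ 3 - ω) * (ω ^ 3 - ω ^ 2) ≠ 0 := mul_ne_zero (by simpa using h31) h32
  ext i j
  fin_cases i <;> fin_cases j
  · simp [Gg, Matrix.smul_apply, smul_eq_mul]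
    exact Or.inl (Or.inr (by linear_combination (ω ^ 2) * hω3))
  · simp [Gg, Matrix.smul_apply, smul_eq_mul]
    rw [div_mul_eq_mul_div, div_eq_div_iff e1 dω]
    linear_combination a * (-ω ^ 3 + 2 * ω ^ 4 - ω ^ 5) * hωsum
  · simp [Gg, Matrix.smul_apply, smul_eq_mul]
    rw [div_mul_eq_mul_div, div_eq_div_iff e1 dω]
    linear_combination a * (-ω ^ 2 + ω ^ 3 + 2 * ω ^ 4 - 3 * ω ^ 5 + ω ^ 6) * hωsum
  · simp [Gg, Matrix.smul_apply, smul_eq_mul]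
    rw [div_mul_eq_mul_div, div_eq_div_iff e2 dω]
    ring
  · simp [Gg, Matrix.smul_apply, smul_eq_mul]
    exact Or.inl (Or.inr (by ring))
  · simp [Gg, Matrix.smul_apply, smul_eq_mul]
    rw [div_mul_eq_mul_div, div_eq_div_iff e2 dω]
    linear_combination a * (ω ^ 4 - 2 * ω ^ 5 + ω ^ 6) * hωsum
  · simp [Gg, Matrix.smul_apply, smul_eq_mul]
    rw [div_mul_eq_mul_div, div_eq_div_iff e3 dω]
    linear_combination a * (-ω ^ 3 + 2 * ω ^ 4 - ω ^ 5) * hωsum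
  · simp [Gg, Matrix.smul_apply, smul_eq_mul]
    rw [div_mul_eq_mul_div, div_eq_div_iff e3 dω]
    linear_combination a * (-ω ^ 3 + 2 * ω ^ 4 - ω ^ 5) * hωsum
  · simp [Gg, Matrix.smul_apply, smul_eq_mul]
    exact Or.inl (Or.inr (by linear_combination (-ω ^ 3) * hω3))

/-! ### The variable `y_j(t) = ω^j + ω^{3-j} t²` -/

noncomputable def yf (j : ℕ) (t : ℂ) : ℂ := ω ^ j + ω ^ (3 - j) * t ^ 2

lemma yf_zero (j : ℕ) : yf j 0 = ω ^ j := by simp [yf]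

lemma sqrt3_ne : (Real.sqrt 3 : ℂ) ≠ 0 := by
  simp only [ne_eq, Complex.ofReal_eq_zero]
  positivity

lemma lfun_eq (j : ℕ) (hj : ω ^ j * ω ^ (3 - j) = 1) (k : ℂ) (hk : k ≠ 0) :
    lfun j k = yf j k⁻¹ / ((Real.sqrt 3 : ℂ) * k⁻¹) := by
  have hωj : ω ^ j ≠ 0 := pow_ne_zero _ hω0
  rw [lfun, yf]
  field_simp
  linear_combination (-1 : ℂ) * hj

lemma hj1 : ω ^ 1 * ω ^ (3 - 1) = 1 := by
  rw [show (3 - 1 : ℕ) = 2 from rfl, ← pow_add]; exact hω3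
lemma hj2 : ω ^ 2 * ω ^ (3 - 2) = 1 := by
  rw [show (3 - 2 : ℕ) = 1 from rfl, ← pow_add]; exact hω3
lemma hj3 : ω ^ 3 * ω ^ (3 - 3) = 1 := by
  rw [show (3 - 3 : ℕ) = 0 from rfl, pow_zero, mul_one]; exact hω3

open Filter Topology Bornology in
lemma Gg_tendsto (a b : ℂ) :
    Tendsto (fun t : ℂ => Gg a b ((Real.sqrt 3 : ℂ) * t) (yf 1 t) (yf 2 t) (yf 3 t))
      (𝓝 0) (𝓝 (Gg a b 0 (ω ^ 1) (ω ^ 2) (ω ^ 3))) := by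
  have key : ContinuousAt
      (fun t : ℂ => Gg a b ((Real.sqrt 3 : ℂ) * t) (yf 1 t) (yf 2 t) (yf 3 t)) 0 := by
    apply continuousAt_pi'
    intro i
    apply continuousAt_pi'
    intro j
    fin_cases i <;> fin_cases j <;>
      · simp only [Gg, yf, Matrix.cons_val', Matrix.cons_val_zero, Matrix.cons_val_one,
          Matrix.head_cons, Matrix.empty_val', Matrix.cons_val_fin_one, Matrix.of_apply,
          Matrix.cons_val_two, Matrix.tail_cons, Matrix.head_fin_const, Fin.isValue]
        apply ContinuousAt.div
        · fun_prop
        · fun_prop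
        · have k12 : ω - ω ^ 2 ≠ 0 := by simpa using d12
          have k13 : ω - ω ^ 3 ≠ 0 := by simpa using d13
          have k21 : ω ^ 2 - ω ≠ 0 := by
            simpa using (show ω ^ 2 - ω ^ 1 ≠ 0 from fun h => d12 (by linear_combination -h))
          have k31 : ω ^ 3 - ω ≠ 0 := by
            simpa using (show ω ^ 3 - ω ^ 1 ≠ 0 from fun h => d13 (by linear_combination -h))
          have k32 : ω ^ 3 - ω ^ 2 ≠ 0 := fun h => d23 (by linear_combination -h)
          have k23 := d23
          norm_num
          first
          | exact ⟨k12, k13⟩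
          | exact ⟨k21, k23⟩
          | exact ⟨k31, k32⟩
          | exact mul_ne_zero k12 k13
          | exact mul_ne_zero k21 k23
          | exact mul_ne_zero k31 k32
  have := key.tendsto
  simpa [yf_zero] using this

open Filter Topology Bornology in
/-- As `|k| → ∞`, `P(k)⁻¹ A P(k) → 𝒱̃ = (a/(ω(1-ω))) N`, where `A` has rows
`(a,0,0)`, `(0,0,0)`, `(0,b,-a)` and `N` has rows `(0,ω,1+ω)`, `(1+ω,0,ω)`, `(ω,1+ω,0)`. -/
theorem Vtilde1_leading_term_at_infinity (a b : ℂ) :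
    Tendsto
      (fun k : ℂ => (Pmat k)⁻¹ *
        (!![a, 0, 0;
            0, 0, 0;
            0, b, -a] : Matrix (Fin 3) (Fin 3) ℂ) * Pmat k)
      (cobounded ℂ)
      (𝓝 ((a / (ω * (1 - ω))) •
        !![0, ω, 1 + ω;
           1 + ω, 0, ω;
           ω, 1 + ω, 0])) := by
  have h0 : Tendsto (fun k : ℂ => k⁻¹) (cobounded ℂ) (𝓝 0) := tendsto_inv₀_cobounded
  -- eventual nonvanishing of the differences
  have c12 : ContinuousAt (fun t : ℂ => yf 1 t - yf 2 t) 0 := by unfold yf; fun_prop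
  have c13 : ContinuousAt (fun t : ℂ => yf 1 t - yf 3 t) 0 := by unfold yf; fun_prop
  have c23 : ContinuousAt (fun t : ℂ => yf 2 t - yf 3 t) 0 := by unfold yf; fun_prop
  have ev12 : ∀ᶠ t : ℂ in 𝓝 0, yf 1 t - yf 2 t ≠ 0 :=
    c12.eventually_ne (by simpa [yf_zero, sub_eq_zero] using sub_ne_zero.mp d12)
  have ev13 : ∀ᶠ t : ℂ in 𝓝 0, yf 1 t - yf 3 t ≠ 0 :=
    c13.eventually_ne (by simpa [yf_zero, sub_eq_zero] using sub_ne_zero.mp d13)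
  have ev23 : ∀ᶠ t : ℂ in 𝓝 0, yf 2 t - yf 3 t ≠ 0 :=
    c23.eventually_ne (by simpa [yf_zero, sub_eq_zero] using sub_ne_zero.mp d23)
  have hev : ∀ᶠ k : ℂ in cobounded ℂ,
      (Pmat k)⁻¹ * !![a, 0, 0; 0, 0, 0; 0, b, -a] * Pmat k =
      Gg a b ((Real.sqrt 3 : ℂ) * k⁻¹) (yf 1 k⁻¹) (yf 2 k⁻¹) (yf 3 k⁻¹) := by
    filter_upwards [h0.eventually ev12, h0.eventually ev13, h0.eventually ev23,
      eventually_ne_cobounded (0 : ℂ)] with k A12 A13 A23 hk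
    have hu : (Real.sqrt 3 : ℂ) * k⁻¹ ≠ 0 := mul_ne_zero sqrt3_ne (inv_ne_zero hk)
    set u := (Real.sqrt 3 : ℂ) * k⁻¹ with hudef
    have hx1 : lfun 1 k = yf 1 k⁻¹ / u := lfun_eq 1 hj1 k hk
    have hx2 : lfun 2 k = yf 2 k⁻¹ / u := lfun_eq 2 hj2 k hk
    have hx3 : lfun 3 k = yf 3 k⁻¹ / u := lfun_eq 3 hj3 k hk
    have hd12 : yf 1 k⁻¹ / u - yf 2 k⁻¹ / u ≠ 0 := by
      rw [div_sub_div_same]; exact div_ne_zero A12 hu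
    have hd13 : yf 1 k⁻¹ / u - yf 3 k⁻¹ / u ≠ 0 := by
      rw [div_sub_div_same]; exact div_ne_zero A13 hu
    have hd23 : yf 2 k⁻¹ / u - yf 3 k⁻¹ / u ≠ 0 := by
      rw [div_sub_div_same]; exact div_ne_zero A23 hu
    have hP : Pmat k = Pg (yf 1 k⁻¹ / u) (yf 2 k⁻¹ / u) (yf 3 k⁻¹ / u) := by
      rw [show Pmat k = Pg (lfun 1 k) (lfun 2 k) (lfun 3 k) from rfl, hx1, hx2, hx3]
    rw [hP, Matrix.inv_eq_left_inv (QP _ _ _ hd12 hd13 hd23),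
      QAP a b _ _ _ hd12 hd13 hd23, Mg_eq_Gg a b u _ _ _ hu A12 A13 A23]
  have hT := (Gg_tendsto a b).comp h0
  rw [Gg_zero a b] at hT
  exact Filter.Tendsto.congr' (hev.mono fun k hk => hk.symm) hT
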